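/- Let p, q, a ∈ ℂⁿ, let b ∈ ℂ, fix β ∈ {1,…,n}, and for each j ∈ {1,…,n} define the functions P_j, S_j and the functions Q, R on U(n) by P_j(z) = Σ_k p_k·a_j·z_{kj}, Q(z) = Σ_k q_k·b·z_{kβ}, R(z) = Σ_k p_k·b·z_{kβ}, S_j(z) = Σ_k q_k·a_j·z_{kj}. Then all of these functions are eigenfunctions of τ with eigenvalue −n, and for all j, k the following identities of functions on U(n) hold: κ(P_j,P_k) = −P_j·P_k, κ(S_j,S_k) = −S_j·S_k, κ(Q,Q) = −Q², κ(R,R) = −R², κ(Q,R) = −Q·R, κ(Q,S_j) = −Q·S_j, κ(P_j,R) = −P_j·R, κ(P_j,S_k) = −P_k·S_j, κ(P_j,Q) = −R·S_j, κ(R,S_j) = −P_j·Q. (Thus the conditions (PP-QQ) of the paper's general scheme hold on the unitary group with μ = −1.) -/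

import Mathlib

/-!
Every function in the statement has the form `z ↦ c * (u ᵥ* z) j`, so `F (z * Z)` is linear in
`Z` with coefficients `w = u ᵥ* z`. Both `τ` and `κ` are then governed by the completeness
relation of the orthonormal basis `B` of `u(n)`,
`Σ_{Z ∈ B} Z_ab Z_cd = -δ_ad δ_bc`.
Taking `b = c` and summing gives `Σ_{Z ∈ B} Z² = -n`, hence `τ F = -n F`; and
`κ (c (u ᵥ* z)_j) (d (v ᵥ* z)_l) = -(c (u ᵥ* z)_l) (d (v ᵥ* z)_j)`: `κ` exchanges the
two columns, which gives all the listed identities.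
-/

/-- The matrix `E_rs` with `(r,s)`-entry `1` and all other entries `0`. -/
noncomputable def EE (n : ℕ) (r s : Fin n) : Matrix (Fin n) (Fin n) ℂ :=
  Matrix.single r s 1

/-- `X_rs = (E_rs + E_sr)/√2`. -/
noncomputable def XX (n : ℕ) (r s : Fin n) : Matrix (Fin n) (Fin n) ℂ :=
  (Real.sqrt 2 : ℂ)⁻¹ • (EE n r s + EE n s r)

/-- `Y_rs = (E_rs - E_sr)/√2`. -/
noncomputable def YY (n : ℕ) (r s : Fin n) : Matrix (Fin n) (Fin n) ℂ :=
  (Real.sqrt 2 : ℂ)⁻¹ • (EE n r s - EE n s r)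

/-- `D_r = E_rr`. -/
noncomputable def DD (n : ℕ) (r : Fin n) : Matrix (Fin n) (Fin n) ℂ :=
  Matrix.single r r 1

/-- The Laplace–Beltrami operator `τ(F)(z) = Σ_{Z ∈ B} F(z·Z·Z)` of the bi-invariant
metric on `U(n)`, where `B = {iX_rs, Y_rs (r<s), iD_r}` is the canonical orthonormal
basis of `u(n)`. -/
noncomputable def tauU (n : ℕ) (F : Matrix (Fin n) (Fin n) ℂ → ℂ)
    (z : Matrix (Fin n) (Fin n) ℂ) : ℂ :=
  (∑ r : Fin n, ∑ s : Fin n, if r < s then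
      F (z * (Complex.I • XX n r s) * (Complex.I • XX n r s))
        + F (z * YY n r s * YY n r s)
    else 0)
  + ∑ r : Fin n, F (z * (Complex.I • DD n r) * (Complex.I • DD n r))

/-- The conformality operator `κ(F,G)(z) = Σ_{Z ∈ B} F(z·Z)·G(z·Z)` on `U(n)`. -/
noncomputable def kappaU (n : ℕ) (F G : Matrix (Fin n) (Fin n) ℂ → ℂ)
    (z : Matrix (Fin n) (Fin n) ℂ) : ℂ :=
  (∑ r : Fin n, ∑ s : Fin n, if r < s then
      F (z * (Complex.I • XX n r s)) * G (z * (Complex.I • XX n r s))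
        + F (z * YY n r s) * G (z * YY n r s)
    else 0)
  + ∑ r : Fin n, F (z * (Complex.I • DD n r)) * G (z * (Complex.I • DD n r))

theorem Finset.sum_ite_lt_add_swap_add_diag {ι M : Type*} [Fintype ι] [LinearOrder ι]
    [AddCommMonoid M] (f : ι → ι → M) :
    (∑ r, ∑ s, if r < s then f r s + f s r else 0) + ∑ r, f r r = ∑ r, ∑ s, f r s := by
  have hsplit : ∀ r s, f r s =
      ((if r < s then f r s else 0) + if s < r then f r s else 0) + if r = s then f r s else 0 := by
    intro r s
    rcases lt_trichotomy r s with h | rfl | h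
    · simp [h, h.ne, h.not_gt]
    · simp
    · simp [h, h.ne', h.not_gt]
  have hswap : (∑ r, ∑ s, if s < r then f r s else 0) = ∑ r, ∑ s, if r < s then f s r else 0 :=
    Finset.sum_comm
  have hdiag : (∑ r, ∑ s, if r = s then f r s else 0) = ∑ r, f r r := by simp
  simp_rw [ite_add_zero, Finset.sum_add_distrib, ← hswap, ← hdiag, ← Finset.sum_add_distrib,
    ← hsplit]

namespace Matrix

theorem single_one_apply_eq_one_mul_one {n R : Type*} [DecidableEq n] [Semiring R] (r s a b : n) :
    single r s (1 : R) a b = (1 : Matrix n n R) r a * (1 : Matrix n n R) s b := by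
  simp only [single_apply, one_apply, ite_zero_mul_ite_zero, mul_one]

end Matrix

open Matrix

/-- `tauU n F z` and `kappaU n F G z` are this functional applied to `Z ↦ F (z * Z * Z)` and
`Z ↦ F (z * Z) * G (z * Z)`. -/
noncomputable def unitaryBasisSum (n : ℕ) : (Matrix (Fin n) (Fin n) ℂ → ℂ) →ₗ[ℂ] ℂ where
  toFun Φ :=
    (∑ r : Fin n, ∑ s : Fin n, if r < s then Φ (Complex.I • XX n r s) + Φ (YY n r s) else 0)
    + ∑ r : Fin n, Φ (Complex.I • DD n r)
  map_add' Φ Ψ := by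
    simp only [Pi.add_apply, add_add_add_comm, ite_add_zero, Finset.sum_add_distrib]
  map_smul' c Φ := by
    simp only [Pi.smul_apply, smul_eq_mul, RingHom.id_apply, mul_add, Finset.mul_sum, mul_ite,
      mul_zero]

namespace unitaryBasisSum

variable {n : ℕ}

theorem apply_const_mul (c : ℂ) (Φ : Matrix (Fin n) (Fin n) ℂ → ℂ) :
    unitaryBasisSum n (fun Z => c * Φ Z) = c * unitaryBasisSum n Φ :=
  map_smul (unitaryBasisSum n) c Φ

theorem apply_sum {ι : Type*} (t : Finset ι) (Φ : ι → Matrix (Fin n) (Fin n) ℂ → ℂ) :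
    unitaryBasisSum n (fun Z => ∑ i ∈ t, Φ i Z) = ∑ i ∈ t, unitaryBasisSum n (Φ i) := by
  rw [← map_sum]
  congr 1
  ext Z
  rw [Finset.sum_apply]

theorem apply_entry_mul_entry (a b c d : Fin n) :
    unitaryBasisSum n (fun Z => Z a b * Z c d)
      = -((1 : Matrix (Fin n) (Fin n) ℂ) a d * (1 : Matrix (Fin n) (Fin n) ℂ) b c) := by
  set δ : Fin n → Fin n → ℂ := fun i j => (1 : Matrix (Fin n) (Fin n) ℂ) i j
  -- Each pair `iX_rs, Y_rs` contributes `-(g r s + g s r)` and each `iD_r` contributes `-g r r`.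
  set g : Fin n → Fin n → ℂ := fun r s => δ r a * δ r d * (δ s b * δ s c)
  have hI : Complex.I * Complex.I = -1 := Complex.I_mul_I
  have hc : ((√2 : ℝ) : ℂ)⁻¹ * ((√2 : ℝ) : ℂ)⁻¹ = 1 / 2 := by
    rw [← mul_inv, ← Complex.ofReal_mul, Real.mul_self_sqrt zero_le_two]
    norm_num
  have hpair : ∀ r s, (Complex.I • XX n r s) a b * (Complex.I • XX n r s) c d
      + YY n r s a b * YY n r s c d = -g r s + -g s r := by
    intro r s
    simp only [XX, YY, EE, Matrix.smul_apply, Matrix.add_apply, Matrix.sub_apply, smul_eq_mul,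
      single_one_apply_eq_one_mul_one, g]
    linear_combination (((√2 : ℝ) : ℂ)⁻¹ * ((√2 : ℝ) : ℂ)⁻¹ * (δ r a * δ s b + δ s a * δ r b)
      * (δ r c * δ s d + δ s c * δ r d)) * hI
      - 2 * (δ r a * δ s b * (δ s c * δ r d) + δ s a * δ r b * (δ r c * δ s d)) * hc
  have hdiag : ∀ r, (Complex.I • DD n r) a b * (Complex.I • DD n r) c d = -g r r := by
    intro r
    simp only [DD, Matrix.smul_apply, smul_eq_mul, single_one_apply_eq_one_mul_one, g]
    linear_combination (δ r a * δ r b * (δ r c * δ r d)) * hI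
  calc unitaryBasisSum n (fun Z => Z a b * Z c d)
      = (∑ r, ∑ s, if r < s then -g r s + -g s r else 0) + ∑ r, -g r r := by
        simp only [unitaryBasisSum, LinearMap.coe_mk, AddHom.coe_mk, hpair, hdiag]
    _ = ∑ r, ∑ s, -g r s := Finset.sum_ite_lt_add_swap_add_diag _
    _ = -(δ a d * δ b c) := by
        simp only [g, δ, Finset.sum_neg_distrib, one_apply, ite_zero_mul_ite_zero, mul_one]
        simp [ite_and]

end unitaryBasisSum

section

variable {n : ℕ}

theorem tauU_const_mul_vecMul_apply (c : ℂ) (u : Fin n → ℂ) (j : Fin n)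
    (z : Matrix (Fin n) (Fin n) ℂ) :
    tauU n (fun z => c * (u ᵥ* z) j) z = -(n : ℂ) * (c * (u ᵥ* z) j) := by
  have hexpand : (fun Z => c * (u ᵥ* (z * Z * Z)) j)
      = fun Z => c * ∑ m, ∑ k, (u ᵥ* z) m * (Z m k * Z k j) := by
    funext Z
    rw [Matrix.mul_assoc, ← vecMul_vecMul]
    simp only [vecMul, dotProduct, mul_apply, Finset.mul_sum]
  change unitaryBasisSum n (fun Z => c * (u ᵥ* (z * Z * Z)) j) = _
  simp only [hexpand, unitaryBasisSum.apply_const_mul, unitaryBasisSum.apply_sum,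
    unitaryBasisSum.apply_entry_mul_entry]
  simp only [one_apply, mul_one, mul_neg, mul_ite, mul_zero, Finset.sum_neg_distrib,
    Finset.sum_ite_irrel, Finset.sum_const, Finset.card_univ, Fintype.card_fin, nsmul_eq_mul,
    Finset.sum_ite_eq', Finset.mem_univ, if_true]
  ring

theorem kappaU_const_mul_vecMul_apply (c d : ℂ) (u v : Fin n → ℂ) (j l : Fin n)
    (z : Matrix (Fin n) (Fin n) ℂ) :
    kappaU n (fun z => c * (u ᵥ* z) j) (fun z => d * (v ᵥ* z) l) z
      = -((c * (u ᵥ* z) l) * (d * (v ᵥ* z) j)) := by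
  have hexpand : (fun Z => c * (u ᵥ* (z * Z)) j * (d * (v ᵥ* (z * Z)) l))
      = fun Z => c * d * ∑ r, ∑ s, (u ᵥ* z) r * (v ᵥ* z) s * (Z r j * Z s l) := by
    funext Z
    rw [← vecMul_vecMul, ← vecMul_vecMul, mul_mul_mul_comm]
    generalize u ᵥ* z = w
    generalize v ᵥ* z = w'
    simp only [vecMul, dotProduct, Finset.sum_mul_sum]
    congr 1
    exact Finset.sum_congr rfl fun r _ => Finset.sum_congr rfl fun s _ => by ring
  change unitaryBasisSum n (fun Z => c * (u ᵥ* (z * Z)) j * (d * (v ᵥ* (z * Z)) l)) = _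
  simp only [hexpand, unitaryBasisSum.apply_const_mul, unitaryBasisSum.apply_sum,
    unitaryBasisSum.apply_entry_mul_entry]
  simp only [one_apply, mul_ite, mul_one, mul_zero, mul_neg, Finset.sum_neg_distrib,
    Finset.sum_ite_eq, Finset.sum_ite_eq', Finset.mem_univ, if_true]
  ring

theorem sum_mul_mul_apply_eq_mul_vecMul_apply (u : Fin n → ℂ) (c : ℂ) (j : Fin n) :
    (fun z : Matrix (Fin n) (Fin n) ℂ => ∑ k, u k * c * z k j) = fun z => c * (u ᵥ* z) j := by
  funext z
  simp only [vecMul, dotProduct, Finset.mul_sum]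
  exact Finset.sum_congr rfl fun k _ => by ring

end

theorem stmt_8_general (n : ℕ) (p q a : Fin n → ℂ) (b : ℂ) (β : Fin n)
    (P S : Fin n → Matrix (Fin n) (Fin n) ℂ → ℂ)
    (Q R : Matrix (Fin n) (Fin n) ℂ → ℂ)
    (hPdef : ∀ j, P j = fun z => ∑ k : Fin n, p k * a j * z k j)
    (hQdef : Q = fun z => ∑ k : Fin n, q k * b * z k β)
    (hRdef : R = fun z => ∑ k : Fin n, p k * b * z k β)
    (hSdef : ∀ j, S j = fun z => ∑ k : Fin n, q k * a j * z k j) :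
    ∀ z ∈ Matrix.unitaryGroup (Fin n) ℂ,
      (∀ j : Fin n, tauU n (P j) z = -(n : ℂ) * P j z) ∧
      tauU n Q z = -(n : ℂ) * Q z ∧
      tauU n R z = -(n : ℂ) * R z ∧
      (∀ j : Fin n, tauU n (S j) z = -(n : ℂ) * S j z) ∧
      (∀ j k : Fin n, kappaU n (P j) (P k) z = -(P j z * P k z)) ∧
      (∀ j k : Fin n, kappaU n (S j) (S k) z = -(S j z * S k z)) ∧
      kappaU n Q Q z = -(Q z * Q z) ∧
      kappaU n R R z = -(R z * R z) ∧
      kappaU n Q R z = -(Q z * R z) ∧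
      (∀ j : Fin n, kappaU n Q (S j) z = -(Q z * S j z)) ∧
      (∀ j : Fin n, kappaU n (P j) R z = -(P j z * R z)) ∧
      (∀ j k : Fin n, kappaU n (P j) (S k) z = -(P k z * S j z)) ∧
      (∀ j : Fin n, kappaU n (P j) Q z = -(R z * S j z)) ∧
      (∀ j : Fin n, kappaU n R (S j) z = -(P j z * Q z)) := by
  have hP j : P j = fun z => a j * (p ᵥ* z) j :=
    (hPdef j).trans (sum_mul_mul_apply_eq_mul_vecMul_apply p (a j) j)
  have hS j : S j = fun z => a j * (q ᵥ* z) j :=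
    (hSdef j).trans (sum_mul_mul_apply_eq_mul_vecMul_apply q (a j) j)
  have hQ : Q = fun z => b * (q ᵥ* z) β :=
    hQdef.trans (sum_mul_mul_apply_eq_mul_vecMul_apply q b β)
  have hR : R = fun z => b * (p ᵥ* z) β :=
    hRdef.trans (sum_mul_mul_apply_eq_mul_vecMul_apply p b β)
  intro z _
  refine ⟨fun j => ?_, ?_, ?_, fun j => ?_, fun j k => ?_, fun j k => ?_, ?_, ?_, ?_,
    fun j => ?_, fun j => ?_, fun j k => ?_, fun j => ?_, fun j => ?_⟩ <;>
  simp only [hP, hQ, hR, hS, tauU_const_mul_vecMul_apply, kappaU_const_mul_vecMul_apply] <;>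
  ring

/-- The functions `P_j(z) = Σ_k p_k a_j z_{kj}`, `Q(z) = Σ_k q_k b z_{kβ}`,
`R(z) = Σ_k p_k b z_{kβ}`, `S_j(z) = Σ_k q_k a_j z_{kj}` on `U(n)` are eigenfunctions
of `τ` with eigenvalue `-n` and satisfy the conditions (PP-QQ) with `μ = -1`. -/
theorem stmt_8 (n : ℕ) (hn : 0 < n) (p q a : Fin n → ℂ) (b : ℂ) (β : Fin n)
    (P S : Fin n → Matrix (Fin n) (Fin n) ℂ → ℂ)
    (Q R : Matrix (Fin n) (Fin n) ℂ → ℂ)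
    (hPdef : ∀ j, P j = fun z => ∑ k : Fin n, p k * a j * z k j)
    (hQdef : Q = fun z => ∑ k : Fin n, q k * b * z k β)
    (hRdef : R = fun z => ∑ k : Fin n, p k * b * z k β)
    (hSdef : ∀ j, S j = fun z => ∑ k : Fin n, q k * a j * z k j) :
    ∀ z ∈ Matrix.unitaryGroup (Fin n) ℂ,
      (∀ j : Fin n, tauU n (P j) z = -(n : ℂ) * P j z) ∧
      tauU n Q z = -(n : ℂ) * Q z ∧
      tauU n R z = -(n : ℂ) * R z ∧
      (∀ j : Fin n, tauU n (S j) z = -(n : ℂ) * S j z) ∧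
      (∀ j k : Fin n, kappaU n (P j) (P k) z = -(P j z * P k z)) ∧
      (∀ j k : Fin n, kappaU n (S j) (S k) z = -(S j z * S k z)) ∧
      kappaU n Q Q z = -(Q z * Q z) ∧
      kappaU n R R z = -(R z * R z) ∧
      kappaU n Q R z = -(Q z * R z) ∧
      (∀ j : Fin n, kappaU n Q (S j) z = -(Q z * S j z)) ∧
      (∀ j : Fin n, kappaU n (P j) R z = -(P j z * R z)) ∧
      (∀ j k : Fin n, kappaU n (P j) (S k) z = -(P k z * S j z)) ∧
      (∀ j : Fin n, kappaU n (P j) Q z = -(R z * S j z)) ∧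
      (∀ j : Fin n, kappaU n R (S j) z = -(P j z * Q z)) :=
  stmt_8_general n p q a b β P S Q R hPdef hQdef hRdef hSdef
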